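/- arXiv:2208.10326 — 2 statements merged into one kernel-verified Lean document; each statement's English description precedes it below -/
import Mathlib

section
/- Let A be the abelian group generated by elements s_σ indexed by permutations σ ∈ S₃, subject to the relations s_σ = s_{σ·(2 3)} for all σ (invariance under swapping the last two entries) and s_σ + s_{σ·(1 2 3)} + s_{σ·(1 3 2)} = 0 for all σ (cyclic sum relation). Then A is a free abelian group of rank 2, isomorphic to ℤ³/Δ where Δ is the diagonal subgroup, via s_σ ↦ class of the standard basis vector e_{σ(1)}. -/
open Finsupp

/-- The relations subgroup: s_σ = s_{σ·(2 3)} and s_σ + s_{σ·(1 2 3)} + s_{σ·(1 3 2)} = 0. -/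
noncomputable def relS3 : Submodule ℤ (Equiv.Perm (Fin 3) →₀ ℤ) :=
  Submodule.span ℤ
    ((Set.range fun σ : Equiv.Perm (Fin 3) =>
        single σ (1 : ℤ) - single (σ * Equiv.swap 1 2) 1) ∪
     (Set.range fun σ : Equiv.Perm (Fin 3) =>
        single σ (1 : ℤ) + single (σ * finRotate 3) 1 + single (σ * (finRotate 3)⁻¹) 1))

/-- The abelian group generated by the s_σ subject to the two relations. -/
def sGroup : Type := (Equiv.Perm (Fin 3) →₀ ℤ) ⧸ relS3

noncomputable instance : AddCommGroup sGroup := by unfold sGroup; infer_instance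
noncomputable instance : Module ℤ sGroup := by unfold sGroup; infer_instance

/-- The diagonal submodule Δ ⊂ ℤ³. -/
def diag3 : Submodule ℤ (Fin 3 → ℤ) := Submodule.span ℤ {fun _ => 1}

/-! Auxiliary definitions: we work with the raw quotient type throughout. -/

noncomputable def f0 : (Equiv.Perm (Fin 3) →₀ ℤ) →ₗ[ℤ] ((Fin 3 → ℤ) ⧸ diag3) :=
  Finsupp.lift _ ℤ _ (fun σ => Submodule.Quotient.mk (Pi.single (σ 0) (1:ℤ)))

lemma f0_single (σ : Equiv.Perm (Fin 3)) :
    f0 (single σ (1:ℤ)) = Submodule.Quotient.mk (Pi.single (σ 0) (1:ℤ)) := by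
  simp [f0]

lemma ones_mem_diag3 : (fun _ => (1:ℤ) : Fin 3 → ℤ) ∈ diag3 :=
  Submodule.mem_span_singleton_self _

lemma sum_single_perm (σ : Equiv.Perm (Fin 3)) :
    (Pi.single (σ 0) (1:ℤ)) + Pi.single (σ 1) 1 + Pi.single (σ 2) 1
      = (fun _ => (1:ℤ)) := by
  have h1 : ∑ i : Fin 3, Pi.single (σ i) (1:ℤ) = ∑ i : Fin 3, Pi.single i (1:ℤ) :=
    Equiv.sum_comp σ (fun i => Pi.single i (1:ℤ))
  have h2 : ∑ i : Fin 3, Pi.single i (1:ℤ) = (fun _ => (1:ℤ)) :=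
    Finset.univ_sum_single (fun _ => (1:ℤ))
  calc (Pi.single (σ 0) (1:ℤ)) + Pi.single (σ 1) 1 + Pi.single (σ 2) 1
      = ∑ i : Fin 3, Pi.single (σ i) (1:ℤ) := by rw [Fin.sum_univ_three]
    _ = (fun _ => (1:ℤ)) := by rw [h1, h2]

lemma mul_swap_apply_zero (σ : Equiv.Perm (Fin 3)) :
    ((σ * Equiv.swap 1 2 : Equiv.Perm (Fin 3)) : Fin 3 → Fin 3) 0 = σ 0 := by
  rw [Equiv.Perm.coe_mul]
  show σ (Equiv.swap 1 2 0) = σ 0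
  congr 1

lemma mul_rot_apply_zero (σ : Equiv.Perm (Fin 3)) :
    ((σ * finRotate 3 : Equiv.Perm (Fin 3)) : Fin 3 → Fin 3) 0 = σ 1 := by
  rw [Equiv.Perm.coe_mul]
  show σ (finRotate 3 0) = σ 1
  congr 1

lemma mul_rotinv_apply_zero (σ : Equiv.Perm (Fin 3)) :
    ((σ * (finRotate 3)⁻¹ : Equiv.Perm (Fin 3)) : Fin 3 → Fin 3) 0 = σ 2 := by
  rw [Equiv.Perm.coe_mul]
  show σ ((finRotate 3)⁻¹ 0) = σ 2
  congr 1

lemma relS3_le_ker : relS3 ≤ LinearMap.ker f0 := by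
  rw [relS3, Submodule.span_le]
  rintro x (⟨σ, rfl⟩ | ⟨σ, rfl⟩) <;>
    simp only [SetLike.mem_coe, LinearMap.mem_ker, map_sub, map_add, f0_single]
  · rw [mul_swap_apply_zero, sub_self]
  · rw [mul_rot_apply_zero, mul_rotinv_apply_zero, ← Submodule.Quotient.mk_add,
      ← Submodule.Quotient.mk_add, sum_single_perm, Submodule.Quotient.mk_eq_zero]
    exact ones_mem_diag3

noncomputable def ebar : ((Equiv.Perm (Fin 3) →₀ ℤ) ⧸ relS3) →ₗ[ℤ] ((Fin 3 → ℤ) ⧸ diag3) :=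
  Submodule.liftQ relS3 f0 relS3_le_ker

lemma ebar_mk (σ : Equiv.Perm (Fin 3)) :
    ebar (Submodule.Quotient.mk (single σ (1:ℤ))) =
      Submodule.Quotient.mk (Pi.single (σ 0) (1:ℤ)) := by
  rw [ebar, Submodule.liftQ_apply]
  exact f0_single σ

def sigmaOf : Fin 3 → Equiv.Perm (Fin 3) := ![1, finRotate 3, (finRotate 3)⁻¹]

noncomputable def h0 : (Fin 3 → ℤ) →ₗ[ℤ] (Equiv.Perm (Fin 3) →₀ ℤ) :=
  (Finsupp.lsingle (sigmaOf 0)).comp (LinearMap.proj (R := ℤ) (φ := fun _ : Fin 3 => ℤ) 0) +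
  (Finsupp.lsingle (sigmaOf 1)).comp (LinearMap.proj (R := ℤ) (φ := fun _ : Fin 3 => ℤ) 1) +
  (Finsupp.lsingle (sigmaOf 2)).comp (LinearMap.proj (R := ℤ) (φ := fun _ : Fin 3 => ℤ) 2)

lemma h0_single (i : Fin 3) : h0 (Pi.single i (1:ℤ)) = single (sigmaOf i) 1 := by
  fin_cases i <;>
    simp [h0, LinearMap.proj_apply, Pi.single_apply, Finsupp.single_zero, sigmaOf]

noncomputable def g0 : (Fin 3 → ℤ) →ₗ[ℤ] ((Equiv.Perm (Fin 3) →₀ ℤ) ⧸ relS3) :=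
  (relS3.mkQ).comp h0

lemma h0_ones : h0 (fun _ => (1:ℤ)) =
    single (sigmaOf 0) 1 + single (sigmaOf 1) 1 + single (sigmaOf 2) 1 := by
  simp [h0]

lemma diag3_le_ker : diag3 ≤ LinearMap.ker g0 := by
  rw [diag3, Submodule.span_le, Set.singleton_subset_iff]
  simp only [SetLike.mem_coe, LinearMap.mem_ker]
  rw [g0, LinearMap.comp_apply, h0_ones, Submodule.mkQ_apply, Submodule.Quotient.mk_eq_zero]
  have := Submodule.subset_span (R := ℤ) (s :=
    ((Set.range fun σ : Equiv.Perm (Fin 3) =>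
        single σ (1 : ℤ) - single (σ * Equiv.swap 1 2) 1) ∪
     (Set.range fun σ : Equiv.Perm (Fin 3) =>
        single σ (1 : ℤ) + single (σ * finRotate 3) 1 + single (σ * (finRotate 3)⁻¹) 1)))
    (Set.mem_union_right _ ⟨1, rfl⟩)
  simpa [relS3, sigmaOf] using this

noncomputable def gbar : ((Fin 3 → ℤ) ⧸ diag3) →ₗ[ℤ] ((Equiv.Perm (Fin 3) →₀ ℤ) ⧸ relS3) :=
  Submodule.liftQ diag3 g0 diag3_le_ker

lemma gbar_mk (i : Fin 3) :
    gbar (Submodule.Quotient.mk (Pi.single i (1:ℤ))) =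
      Submodule.Quotient.mk (single (sigmaOf i) (1:ℤ)) := by
  rw [gbar, Submodule.liftQ_apply, g0, LinearMap.comp_apply, h0_single, Submodule.mkQ_apply]

lemma sigmaOf_cases : ∀ σ : Equiv.Perm (Fin 3),
    sigmaOf (σ 0) = σ ∨ sigmaOf (σ 0) = σ * Equiv.swap 1 2 := by decide

lemma gbar_ebar : gbar.comp ebar = LinearMap.id := by
  apply Submodule.linearMap_qext
  apply Finsupp.lhom_ext
  intro σ b
  have h1 : (single σ b : Equiv.Perm (Fin 3) →₀ ℤ) = b • single σ 1 := by
    simp [Finsupp.smul_single]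
  rw [h1, map_smul, map_smul]
  congr 1
  simp only [LinearMap.comp_apply, LinearMap.id_apply, Submodule.mkQ_apply]
  rw [ebar_mk, gbar_mk]
  rcases sigmaOf_cases σ with h | h
  · rw [h]
  · rw [h, Submodule.Quotient.eq, ← neg_sub]
    exact neg_mem (Submodule.subset_span (Set.mem_union_left _ ⟨σ, rfl⟩))

lemma sigmaOf_apply_zero (i : Fin 3) : (sigmaOf i) 0 = i := by
  fin_cases i <;> decide

lemma ebar_gbar : ebar.comp gbar = LinearMap.id := by
  apply Submodule.linearMap_qext
  apply (Pi.basisFun ℤ (Fin 3)).ext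
  intro i
  simp only [LinearMap.comp_apply, Pi.basisFun_apply, LinearMap.id_apply, Submodule.mkQ_apply]
  rw [gbar_mk, ebar_mk, sigmaOf_apply_zero]

noncomputable def eIso : ((Equiv.Perm (Fin 3) →₀ ℤ) ⧸ relS3) ≃ₗ[ℤ] ((Fin 3 → ℤ) ⧸ diag3) :=
  LinearEquiv.ofLinear ebar gbar ebar_gbar gbar_ebar

/-! The quotient ℤ³/Δ is isomorphic to ℤ² -/

def pmap : (Fin 3 → ℤ) →ₗ[ℤ] (Fin 2 → ℤ) where
  toFun x := ![x 0 - x 2, x 1 - x 2]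
  map_add' x y := by funext j; fin_cases j <;> simp [add_sub_add_comm]
  map_smul' c x := by funext j; fin_cases j <;> simp [mul_sub]

def qmap : (Fin 2 → ℤ) →ₗ[ℤ] (Fin 3 → ℤ) where
  toFun y := ![y 0, y 1, 0]
  map_add' x y := by funext j; fin_cases j <;> simp
  map_smul' c x := by funext j; fin_cases j <;> simp

lemma diag3_le_ker_pmap : diag3 ≤ LinearMap.ker pmap := by
  rw [diag3, Submodule.span_le, Set.singleton_subset_iff]
  simp only [SetLike.mem_coe, LinearMap.mem_ker, pmap, LinearMap.coe_mk, AddHom.coe_mk]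
  funext j; fin_cases j <;> simp

noncomputable def pbar : ((Fin 3 → ℤ) ⧸ diag3) →ₗ[ℤ] (Fin 2 → ℤ) :=
  Submodule.liftQ diag3 pmap diag3_le_ker_pmap

noncomputable def quotIso : ((Fin 3 → ℤ) ⧸ diag3) ≃ₗ[ℤ] (Fin 2 → ℤ) :=
  LinearEquiv.ofLinear pbar ((diag3.mkQ).comp qmap)
    (by
      apply LinearMap.ext
      intro y
      simp only [LinearMap.comp_apply, LinearMap.id_apply, Submodule.mkQ_apply, pbar,
        Submodule.liftQ_apply]
      funext j; fin_cases j <;> simp [pmap, qmap])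
    (by
      apply Submodule.linearMap_qext
      apply LinearMap.ext
      intro x
      simp only [LinearMap.comp_apply, LinearMap.id_apply, Submodule.mkQ_apply, pbar,
        Submodule.liftQ_apply]
      rw [Submodule.Quotient.eq]
      have : qmap (pmap x) - x = (-(x 2)) • (fun _ => (1:ℤ)) := by
        funext j; fin_cases j <;> (simp [pmap, qmap]; try ring)
      rw [this]
      exact Submodule.smul_mem _ _ ones_mem_diag3)

/-- the group presented by generators s_σ (σ ∈ S₃) and relations
s_σ = s_{σ(2 3)}, s_σ + s_{σ(1 2 3)} + s_{σ(1 3 2)} = 0 is free abelian of rank 2,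
isomorphic to ℤ³/Δ via s_σ ↦ [e_{σ(1)}]. -/
theorem sGroup_iso_quotient_diag :
    Nonempty (sGroup ≃ₗ[ℤ] (Fin 2 → ℤ)) ∧
    ∃ e : sGroup ≃ₗ[ℤ] ((Fin 3 → ℤ) ⧸ diag3),
      ∀ σ : Equiv.Perm (Fin 3),
        e (Submodule.Quotient.mk (single σ (1 : ℤ))) =
          Submodule.Quotient.mk (Pi.single (σ 0) (1 : ℤ)) := by
  constructor
  · exact ⟨eIso.trans quotIso⟩
  · exact ⟨eIso, fun σ => ebar_mk σ⟩
end

section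
/- Let G be a group, let a, g₁, …, g_n ∈ G be elements with a ≠ 1 of infinite order and g₁, …, g_n pairwise commuting, and let ν₁, …, ν_n : G → ℤ be homomorphisms with det(νᵢ(gⱼ)) ≠ 0 and νᵢ(a) = 0 for all i. If moreover a commutes with every gⱼ and ⟨a⟩ ∩ ⟨g₁, …, g_n⟩ = {1}, then the elements a, g₁, …, g_n generate a subgroup of G isomorphic to ℤ^{n+1}. -/
/-! The generators pairwise commute, so they generate an abelian group, namely the image of
`v ↦ a ^ v₀ * ∏ⱼ gⱼ ^ vⱼ₊₁` on `ℤⁿ⁺¹`. This map is injective: applying `νᵢ` to a relation kills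
the `a`-part, so the exponents of the `gⱼ` solve the nondegenerate linear system `(νᵢ(gⱼ))`
and vanish; what remains is `a ^ v₀ = 1`, which forces `v₀ = 0`. -/

open Subgroup
open scoped IsMulCommutative

section CommGroup

variable {H ι : Type*} [CommGroup H] [Fintype ι]

def zpowProdHom (x : ι → H) : Multiplicative (ι → ℤ) →* H where
  toFun v := ∏ i, x i ^ v.toAdd i
  map_one' := by simp
  map_mul' u v := by simp only [toAdd_mul, Pi.add_apply, zpow_add, Finset.prod_mul_distrib]

@[simp]
lemma zpowProdHom_apply (x : ι → H) (v : Multiplicative (ι → ℤ)) :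
    zpowProdHom x v = ∏ i, x i ^ v.toAdd i := rfl

lemma range_zpowProdHom (x : ι → H) : (zpowProdHom x).range = closure (Set.range x) := by
  classical
  apply le_antisymm
  · rintro _ ⟨v, rfl⟩
    exact prod_mem fun i _ ↦ zpow_mem (subset_closure (Set.mem_range_self i)) _
  · refine (closure_le _).2 ?_
    rintro _ ⟨i, rfl⟩
    refine ⟨Multiplicative.ofAdd (Pi.single i 1), ?_⟩
    simp [Pi.single_apply]

lemma map_zpowProdHom_of_map_mul {f : H → ℤ} (hf : ∀ y z, f (y * z) = f y + f z)
    (x : ι → H) (v : Multiplicative (ι → ℤ)) :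
    f (zpowProdHom x v) = ∑ i, v.toAdd i * f (x i) := by
  let φ : H →* Multiplicative ℤ := MonoidHom.mk' (fun y ↦ .ofAdd (f y)) fun y z ↦ by simp [hf]
  have h := congrArg Multiplicative.toAdd (map_prod φ (fun i ↦ x i ^ v.toAdd i) .univ)
  simp only [map_zpow, toAdd_prod, toAdd_zpow, smul_eq_mul] at h
  exact h

lemma nonempty_closure_range_mulEquiv_of_injective {x : ι → H}
    (hx : Function.Injective (zpowProdHom x)) :
    Nonempty (closure (Set.range x) ≃* Multiplicative (ι → ℤ)) :=
  ⟨((MonoidHom.ofInjective hx).trans (MulEquiv.subgroupCongr (range_zpowProdHom x))).symm⟩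

end CommGroup

lemma injective_zpowProdHom_cons {H : Type*} [CommGroup H] {n : ℕ} {a : H} {g : Fin n → H}
    {ν : Fin n → H → ℤ} (hinf : ¬ IsOfFinOrder a) (hν : ∀ i y z, ν i (y * z) = ν i y + ν i z)
    (hdet : (Matrix.of fun i j ↦ ν i (g j)).det ≠ 0) (hνa : ∀ i, ν i a = 0) :
    Function.Injective (zpowProdHom (Fin.cons a g : Fin (n + 1) → H)) := by
  refine (injective_iff_map_eq_one _).2 fun v hv ↦ ?_
  obtain ⟨w, rfl⟩ := Multiplicative.ofAdd.surjective v
  have htail : Fin.tail w = 0 := by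
    refine Matrix.eq_zero_of_mulVec_eq_zero hdet (funext fun j ↦ ?_)
    have hν1 : ν j 1 = 0 := by linarith [mul_one (1 : H) ▸ hν j 1 1]
    have h := map_zpowProdHom_of_map_mul (hν j) (Fin.cons a g) (.ofAdd w)
    simp only [hv, hν1, Fin.sum_univ_succ, Fin.cons_zero, Fin.cons_succ, hνa, mul_zero,
      zero_add, toAdd_ofAdd] at h
    simpa [Matrix.mulVec, dotProduct, Fin.tail, mul_comm] using h.symm
  have hhead : w 0 = 0 := by
    have hsucc (i : Fin n) : w i.succ = 0 := congrFun htail i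
    have ha : a ^ w 0 = 1 := by simpa [Fin.prod_univ_succ, hsucc] using hv
    by_contra h0
    exact hinf (isOfFinOrder_iff_zpow_eq_one.2 ⟨w 0, h0, ha⟩)
  rw [← Fin.cons_self_tail w, hhead, htail]
  exact congrArg Multiplicative.ofAdd Matrix.cons_zero_zero

lemma closure_range_restrict_eq_top {G ι : Type*} [Group G] (x : ι → G) :
    closure (Set.range fun i ↦
      (⟨x i, subset_closure (Set.mem_range_self i)⟩ : closure (Set.range x))) = ⊤ := by
  rw [← closure_closure_coe_preimage]
  congr 1
  ext y
  simp [Subtype.ext_iff, eq_comm]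

theorem central_plus_commuting_gen_free_abelian_general (G : Type*) [Group G] (n : ℕ)
    (a : G) (g : Fin n → G) (ν : Fin n → G → ℤ)
    (hinf : ¬ IsOfFinOrder a)
    (hcomm : ∀ i j, Commute (g i) (g j))
    (hacomm : ∀ j, Commute a (g j))
    (hν : ∀ i a b, ν i (a * b) = ν i a + ν i b)
    (hdet : (Matrix.of fun i j => ν i (g j)).det ≠ 0)
    (hνa : ∀ i, ν i a = 0) :
    Nonempty (↥(Subgroup.closure (insert a (Set.range g))) ≃*
      Multiplicative (Fin (n + 1) → ℤ)) := by
  rw [← Fin.range_cons]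
  set x : Fin (n + 1) → G := Fin.cons a g
  have hx : ∀ i j, Commute (x i) (x j) :=
    Fin.cases (Fin.cases (Commute.refl a) hacomm) fun i ↦ Fin.cases (hacomm i).symm (hcomm i)
  have : IsMulCommutative (closure (Set.range x)) :=
    isMulCommutative_closure (by rintro _ ⟨i, rfl⟩ _ ⟨j, rfl⟩; exact hx i j)
  set x' : Fin (n + 1) → closure (Set.range x) :=
    fun i ↦ ⟨x i, subset_closure (Set.mem_range_self i)⟩
  have hinj : Function.Injective (zpowProdHom x') := by
    rw [← Fin.cons_self_tail x']
    exact injective_zpowProdHom_cons (ν := fun i y ↦ ν i y)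
      (fun h ↦ hinf ((Subgroup.closure _).subtype.isOfFinOrder h)) (fun i y z ↦ hν i y z) hdet
      (fun i ↦ hνa i)
  obtain ⟨e⟩ := nonempty_closure_range_mulEquiv_of_injective hinj
  exact ⟨topEquiv.symm.trans
    ((MulEquiv.subgroupCongr (closure_range_restrict_eq_top x)).symm.trans e)⟩

/-- an infinite-order central element a together with commuting elements
g₁, …, g_n detected by homomorphisms νᵢ : G → ℤ with det(νᵢ(gⱼ)) ≠ 0, νᵢ(a) = 0 and
⟨a⟩ ∩ ⟨g₁, …, g_n⟩ = 1 generate a subgroup isomorphic to ℤ^{n+1}. -/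
theorem central_plus_commuting_gen_free_abelian (G : Type*) [Group G] (n : ℕ)
    (a : G) (g : Fin n → G) (ν : Fin n → G → ℤ)
    (ha1 : a ≠ 1) (hinf : ¬ IsOfFinOrder a)
    (hcomm : ∀ i j, Commute (g i) (g j))
    (hacomm : ∀ j, Commute a (g j))
    (hν : ∀ i a b, ν i (a * b) = ν i a + ν i b)
    (hdet : (Matrix.of fun i j => ν i (g j)).det ≠ 0)
    (hνa : ∀ i, ν i a = 0)
    (hdisj : Subgroup.closure {a} ⊓ Subgroup.closure (Set.range g) = ⊥) :
    Nonempty (↥(Subgroup.closure (insert a (Set.range g))) ≃*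
      Multiplicative (Fin (n + 1) → ℤ)) :=
  central_plus_commuting_gen_free_abelian_general G n a g ν hinf hcomm hacomm hν hdet hνa
end
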